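/- (Reduction) Let 𝒞 be a finite set of constructive formulas and let G = CK+𝒞 be either T-free or T-full. If G proves a sequent Σ, {¬q_j}_{j=1}^m ⇒ ⋁_{i=1}^n p_i, where Σ is a finite multiset of modal Horn formulas and the p_i and q_j are atoms, then there exists a finite multiset Σ' of implicational Horn formulas such that the sequent Σ' ⇒ ⋁_{i=1}^n p_i ∨ ⋁_{j=1}^m q_j is classically valid and G proves Σ ⇒ ⋀Σ'. -/

import Mathlib

set_option autoImplicit false

namespace UPT

/-- Modal formulas over atoms of type `α` (the language `ℒ = {∧,∨,→,⊤,⊥,□,◇}`). -/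
inductive Fml (α : Type) : Type where
  | atom : α → Fml α
  | top  : Fml α
  | bot  : Fml α
  | and  : Fml α → Fml α → Fml α
  | or   : Fml α → Fml α → Fml α
  | imp  : Fml α → Fml α → Fml α
  | box  : Fml α → Fml α
  | dia  : Fml α → Fml α
deriving DecidableEq

variable {α β : Type}

/-- Simultaneous substitution of formulas for atoms. -/
def Fml.subst (σ : β → Fml α) : Fml β → Fml α
  | .atom b  => σ b
  | .top     => .top
  | .bot     => .bot
  | .and A B => .and (A.subst σ) (B.subst σ)
  | .or A B  => .or (A.subst σ) (B.subst σ)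
  | .imp A B => .imp (A.subst σ) (B.subst σ)
  | .box A   => .box (A.subst σ)
  | .dia A   => .dia (A.subst σ)

/-- A sequent: a finite multiset antecedent together with a succedent
containing at most one formula. -/
abbrev Seq (α : Type) : Type := Multiset (Fml α) × Option (Fml α)

/-- A rule set relates a (finite) list of premise sequents to a conclusion sequent. -/
abbrev RuleSet (α : Type) : Type := List (Seq α) → Seq α → Prop

/-- The axioms and rules of the single-conclusion sequent calculus `LJ`, stated
schematically: they are closed under substituting arbitrary formulas for atoms
and arbitrary multisets (resp. succedents) for the context variables. -/
inductive LJRule : List (Seq α) → Seq α → Prop where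
  | id (Γ : Multiset (Fml α)) (A : Fml α) : LJRule [] (A ::ₘ Γ, some A)
  | botL (Γ : Multiset (Fml α)) (Δ : Option (Fml α)) : LJRule [] (.bot ::ₘ Γ, Δ)
  | topR (Γ : Multiset (Fml α)) : LJRule [] (Γ, some .top)
  | wL (A : Fml α) (Γ : Multiset (Fml α)) (Δ : Option (Fml α)) :
      LJRule [(Γ, Δ)] (A ::ₘ Γ, Δ)
  | wR (A : Fml α) (Γ : Multiset (Fml α)) : LJRule [(Γ, none)] (Γ, some A)
  | cL (A : Fml α) (Γ : Multiset (Fml α)) (Δ : Option (Fml α)) :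
      LJRule [(A ::ₘ A ::ₘ Γ, Δ)] (A ::ₘ Γ, Δ)
  | cut (A : Fml α) (Γ : Multiset (Fml α)) (Δ : Option (Fml α)) :
      LJRule [(Γ, some A), (A ::ₘ Γ, Δ)] (Γ, Δ)
  | andL₁ (A B : Fml α) (Γ : Multiset (Fml α)) (Δ : Option (Fml α)) :
      LJRule [(A ::ₘ Γ, Δ)] (.and A B ::ₘ Γ, Δ)
  | andL₂ (A B : Fml α) (Γ : Multiset (Fml α)) (Δ : Option (Fml α)) :
      LJRule [(B ::ₘ Γ, Δ)] (.and A B ::ₘ Γ, Δ)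
  | andR (A B : Fml α) (Γ : Multiset (Fml α)) :
      LJRule [(Γ, some A), (Γ, some B)] (Γ, some (.and A B))
  | orL (A B : Fml α) (Γ : Multiset (Fml α)) (Δ : Option (Fml α)) :
      LJRule [(A ::ₘ Γ, Δ), (B ::ₘ Γ, Δ)] (.or A B ::ₘ Γ, Δ)
  | orR₁ (A B : Fml α) (Γ : Multiset (Fml α)) : LJRule [(Γ, some A)] (Γ, some (.or A B))
  | orR₂ (A B : Fml α) (Γ : Multiset (Fml α)) : LJRule [(Γ, some B)] (Γ, some (.or A B))
  | impL (A B : Fml α) (Γ : Multiset (Fml α)) (Δ : Option (Fml α)) :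
      LJRule [(Γ, some A), (B ::ₘ Γ, Δ)] (.imp A B ::ₘ Γ, Δ)
  | impR (A B : Fml α) (Γ : Multiset (Fml α)) :
      LJRule [(A ::ₘ Γ, some B)] (Γ, some (.imp A B))

/-- The rule `K_□`: from `Γ ⇒ A` infer `□Γ ⇒ □A`. -/
inductive KBoxRule : List (Seq α) → Seq α → Prop where
  | mk (Γ : Multiset (Fml α)) (A : Fml α) :
      KBoxRule [(Γ, some A)] (Γ.map Fml.box, some (.box A))

/-- The rule `K_◇`: from `Γ, A ⇒ B` infer `□Γ, ◇A ⇒ ◇B`. -/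
inductive KDiaRule : List (Seq α) → Seq α → Prop where
  | mk (Γ : Multiset (Fml α)) (A B : Fml α) :
      KDiaRule [(A ::ₘ Γ, some B)] (.dia A ::ₘ Γ.map Fml.box, some (.dia B))

/-- The rule `◇L`: from `Γ, A ⇒ B` infer `Γ, ◇A ⇒ ◇B`. -/
inductive DiaLRule : List (Seq α) → Seq α → Prop where
  | mk (Γ : Multiset (Fml α)) (A B : Fml α) :
      DiaLRule [(A ::ₘ Γ, some B)] (.dia A ::ₘ Γ, some (.dia B))

/-- Adding a set `Ax` of axioms to a calculus: the initial sequents `⇒ σ(A)`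
for every substitution instance `σ(A)` of every `A ∈ Ax`. -/
def axRule (Ax : Fml α → Prop) : RuleSet α := fun ps c =>
  ps = [] ∧ ∃ (A : Fml α) (σ : α → Fml α), Ax A ∧ c = ((0 : Multiset (Fml α)), some (A.subst σ))

/-- Using a set of sequents as additional initial sequents (assumptions). -/
def hypRule (H : Set (Seq α)) : RuleSet α := fun ps c => ps = [] ∧ c ∈ H

/-- The sequent calculus `LJ+Ax`. -/
def LJSys (Ax : Fml α → Prop) : RuleSet α := fun ps c => LJRule ps c ∨ axRule Ax ps c

/-- The sequent calculus `CK+Ax = LJ + K_□ + K_◇ + Ax`. -/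
def CKSys (Ax : Fml α → Prop) : RuleSet α := fun ps c =>
  LJRule ps c ∨ KBoxRule ps c ∨ KDiaRule ps c ∨ axRule Ax ps c

/-- The sequent calculus `CK_□+Ax = LJ + K_□ + Ax`. -/
def CKBoxSys (Ax : Fml α → Prop) : RuleSet α := fun ps c =>
  LJRule ps c ∨ KBoxRule ps c ∨ axRule Ax ps c

/-- The sequent calculus `BLL+Ax = LJ + ◇L + Ax`. -/
def BLLSys (Ax : Fml α → Prop) : RuleSet α := fun ps c =>
  LJRule ps c ∨ DiaLRule ps c ∨ axRule Ax ps c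

/-- Provability of a sequent in the calculus generated by a rule set. -/
inductive Derives (R : RuleSet α) : Multiset (Fml α) → Option (Fml α) → Prop where
  | step {ps : List (Seq α)} {c : Seq α} (hr : R ps c)
      (hp : ∀ p ∈ ps, Derives R p.1 p.2) : Derives R c.1 c.2

/-- Basic formulas: generated from atoms, `⊤`, `⊥` by `∧`, `∨`, `◇`. -/
inductive Basic : Fml α → Prop where
  | atom (a : α) : Basic (.atom a)
  | top : Basic (.top : Fml α)
  | bot : Basic (.bot : Fml α)
  | and {A B : Fml α} : Basic A → Basic B → Basic (.and A B)
  | or {A B : Fml α} : Basic A → Basic B → Basic (.or A B)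
  | dia {A : Fml α} : Basic A → Basic (.dia A)

/-- Almost positive formulas: generated from basic formulas by `∧`, `∨`, `□`, `◇`
and implications `A → B` with `A` basic and `B` almost positive. -/
inductive AlmostPos : Fml α → Prop where
  | basic {A : Fml α} : Basic A → AlmostPos A
  | and {A B : Fml α} : AlmostPos A → AlmostPos B → AlmostPos (.and A B)
  | or {A B : Fml α} : AlmostPos A → AlmostPos B → AlmostPos (.or A B)
  | box {A : Fml α} : AlmostPos A → AlmostPos (.box A)
  | dia {A : Fml α} : AlmostPos A → AlmostPos (.dia A)
  | imp {A B : Fml α} : Basic A → AlmostPos B → AlmostPos (.imp A B)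

/-- Constructive formulas: generated from basic formulas by `∧`, `□` and
implications `A → B` with `A` almost positive and `B` constructive. -/
inductive Constructive : Fml α → Prop where
  | basic {A : Fml α} : Basic A → Constructive A
  | and {A B : Fml α} : Constructive A → Constructive B → Constructive (.and A B)
  | box {A : Fml α} : Constructive A → Constructive (.box A)
  | imp {A B : Fml α} : AlmostPos A → Constructive B → Constructive (.imp A B)

/-- Harrop formulas: atoms, `⊥`, `⊤`, closed under `∧`, `□`, and implications
`A → B` with `A` arbitrary and `B` Harrop. -/
inductive Harrop : Fml α → Prop where
  | atom (a : α) : Harrop (.atom a)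
  | top : Harrop (.top : Fml α)
  | bot : Harrop (.bot : Fml α)
  | and {A B : Fml α} : Harrop A → Harrop B → Harrop (.and A B)
  | box {A : Fml α} : Harrop A → Harrop (.box A)
  | imp (A : Fml α) {B : Fml α} : Harrop B → Harrop (.imp A B)

/-- Conjunction of a list of formulas (`⋀∅ = ⊤`). -/
def conj : List (Fml α) → Fml α
  | [] => .top
  | [A] => A
  | A :: B :: l => .and A (conj (B :: l))

/-- Disjunction of a list of formulas (`⋁∅ = ⊥`). -/
def disj : List (Fml α) → Fml α
  | [] => .bot
  | [A] => A
  | A :: B :: l => .or A (disj (B :: l))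

/-- Disjunction of a succedent (at most one formula; `⋁∅ = ⊥`). -/
def odisj : Option (Fml α) → Fml α
  | none => .bot
  | some A => A

/-- The multiset `{A_i → B_i}_{i ∈ I}` of implications of an indexed family. -/
def imps (AB : List (Fml α × Fml α)) : Multiset (Fml α) :=
  ↑(AB.map fun p => Fml.imp p.1 p.2)

/-- The conjunction `⋀_{i∈I} (A_i → B_i)` of an indexed family of implications. -/
def impConj (AB : List (Fml α × Fml α)) : Fml α :=
  conj (AB.map fun p => Fml.imp p.1 p.2)

/-- Truth in the one-node *irreflexive* frame `𝒦ᵢ` under a Boolean valuation: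
`□A` is always true and `◇A` is always false; the propositional connectives
are evaluated classically. -/
def evalI (v : α → Bool) : Fml α → Bool
  | .atom a  => v a
  | .top     => true
  | .bot     => false
  | .and A B => evalI v A && evalI v B
  | .or A B  => evalI v A || evalI v B
  | .imp A B => !evalI v A || evalI v B
  | .box _   => true
  | .dia _   => false

/-- Truth in the one-node *reflexive* frame `𝒦ᵣ` under a Boolean valuation:
`□A` and `◇A` take the value of `A`. -/
def evalR (v : α → Bool) : Fml α → Bool
  | .atom a  => v a
  | .top     => true
  | .bot     => false
  | .and A B => evalR v A && evalR v B
  | .or A B  => evalR v A || evalR v B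
  | .imp A B => !evalR v A || evalR v B
  | .box A   => evalR v A
  | .dia A   => evalR v A

/-- Validity of a sequent with respect to a one-node semantics: under every
valuation, if all formulas of the antecedent are true then so is the succedent. -/
def SeqValid (ev : (α → Bool) → Fml α → Bool) (Γ : Multiset (Fml α)) (Δ : Option (Fml α)) :
    Prop :=
  ∀ v : α → Bool, (∀ A ∈ Γ, ev v A = true) → ∃ B ∈ Δ, ev v B = true

/-- `CK+Ax` is T-free: every provable sequent is valid in the irreflexive node frame. -/
def TFree (Ax : Fml α → Prop) : Prop :=
  ∀ (Γ : Multiset (Fml α)) (Δ : Option (Fml α)), Derives (CKSys Ax) Γ Δ → SeqValid evalI Γ Δ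

/-- `CK+Ax` is T-full: every provable sequent is valid in the reflexive node
frame and the calculus proves `⇒ □p → p` and `⇒ p → ◇p`. -/
def TFull (Ax : Fml α → Prop) : Prop :=
  (∀ (Γ : Multiset (Fml α)) (Δ : Option (Fml α)), Derives (CKSys Ax) Γ Δ → SeqValid evalR Γ Δ) ∧
  (∀ a : α, Derives (CKSys Ax) 0 (some (.imp (.box (.atom a)) (.atom a)))) ∧
  (∀ a : α, Derives (CKSys Ax) 0 (some (.imp (.atom a) (.dia (.atom a)))))

/-- Classical validity of a (modality-free) sequent: `⋀Γ → ⋁Δ` is true under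
every Boolean valuation of the atoms. -/
def ClValid (Γ : Multiset (Fml α)) (Δ : Option (Fml α)) : Prop :=
  ∀ v : α → Bool, (∀ A ∈ Γ, evalI v A = true) → ∃ B ∈ Δ, evalI v B = true

/-- Nonempty conjunctions of atoms. -/
inductive AtomConj : Fml α → Prop where
  | single (a : α) : AtomConj (.atom a)
  | and {A B : Fml α} : AtomConj A → AtomConj B → AtomConj (.and A B)

/-- Implicational Horn formulas: `⊥`, atoms, and implications `⋀Q → r` with `Q`
a nonempty multiset of atoms and `r` an atom or `⊥`. -/
inductive ImpHorn : Fml α → Prop where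
  | bot : ImpHorn (.bot : Fml α)
  | atom (a : α) : ImpHorn (.atom a)
  | impAtom {A : Fml α} (hA : AtomConj A) (a : α) : ImpHorn (.imp A (.atom a))
  | impBot {A : Fml α} (hA : AtomConj A) : ImpHorn (.imp A .bot)

/-- Formulas of the form `◇^n p` with `p` an atom and `n ≥ 0`. -/
inductive DiaPowAtom : Fml α → Prop where
  | atom (a : α) : DiaPowAtom (.atom a)
  | dia {A : Fml α} : DiaPowAtom A → DiaPowAtom (.dia A)

/-- Nonempty conjunctions `⋀_{i=1}^k ◇^{n_i} p_i` of formulas `◇^{n_i} p_i`. -/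
inductive DiaConj : Fml α → Prop where
  | single {A : Fml α} : DiaPowAtom A → DiaConj A
  | and {A B : Fml α} : DiaConj A → DiaConj B → DiaConj (.and A B)

/-- Modal Horn formulas: `⊥` and atoms, closed under `□` and under implications
`A → B` with `A = ⋀_{i=1}^k ◇^{n_i} p_i` and `B` modal Horn. -/
inductive ModalHorn : Fml α → Prop where
  | bot : ModalHorn (.bot : Fml α)
  | atom (a : α) : ModalHorn (.atom a)
  | box {A : Fml α} : ModalHorn A → ModalHorn (.box A)
  | imp {A B : Fml α} : DiaConj A → ModalHorn B → ModalHorn (.imp A B)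

/-- The predicate "all atoms of the formula satisfy `P`". -/
def Fml.AtomsIn (P : α → Prop) : Fml α → Prop
  | .atom a  => P a
  | .top     => True
  | .bot     => True
  | .and A B => A.AtomsIn P ∧ B.AtomsIn P
  | .or A B  => A.AtomsIn P ∧ B.AtomsIn P
  | .imp A B => A.AtomsIn P ∧ B.AtomsIn P
  | .box A   => A.AtomsIn P
  | .dia A   => A.AtomsIn P

/-- No `◇` occurs in the formula. -/
def Fml.DiaFree : Fml α → Prop
  | .atom _  => True
  | .top     => True
  | .bot     => True
  | .and A B => A.DiaFree ∧ B.DiaFree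
  | .or A B  => A.DiaFree ∧ B.DiaFree
  | .imp A B => A.DiaFree ∧ B.DiaFree
  | .box A   => A.DiaFree
  | .dia _   => False

/-- No `□` occurs in the formula. -/
def Fml.BoxFree : Fml α → Prop
  | .atom _  => True
  | .top     => True
  | .bot     => True
  | .and A B => A.BoxFree ∧ B.BoxFree
  | .or A B  => A.BoxFree ∧ B.BoxFree
  | .imp A B => A.BoxFree ∧ B.BoxFree
  | .box _   => False
  | .dia A   => A.BoxFree

/-- The formula is modality-free (propositional). -/
def Fml.ModFree : Fml α → Prop
  | .atom _  => True
  | .top     => True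
  | .bot     => True
  | .and A B => A.ModFree ∧ B.ModFree
  | .or A B  => A.ModFree ∧ B.ModFree
  | .imp A B => A.ModFree ∧ B.ModFree
  | .box _   => False
  | .dia _   => False

/-- An angling of the language: an injection `φ ↦ ⟨φ⟩` from formulas into the
atoms whose image (the angled atoms) is disjoint from a fixed infinite set of
plain atoms. -/
structure Angling (α : Type) where
  angle : Fml α → α
  plain : Set α
  inj : Function.Injective angle
  plain_infinite : plain.Infinite
  disjoint : ∀ φ : Fml α, angle φ ∉ plain

/-- `a` is an angled atom. -/
def Angling.Angled (S : Angling α) (a : α) : Prop := ∃ φ : Fml α, S.angle φ = a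

/-- The translation `t`: `⊥^t = ⊥`, `p^t = ⟨p⟩`, `⊤^t = ⟨⊤⟩`,
`(A ∘ B)^t = (A^t ∘ B^t) ∧ ⟨A ∘ B⟩` and `(○A)^t = (○A^t) ∧ ⟨○A⟩`. -/
def Angling.tr (S : Angling α) : Fml α → Fml α
  | .atom a  => .atom (S.angle (.atom a))
  | .top     => .atom (S.angle .top)
  | .bot     => .bot
  | .and A B => .and (.and (S.tr A) (S.tr B)) (.atom (S.angle (.and A B)))
  | .or A B  => .and (.or (S.tr A) (S.tr B)) (.atom (S.angle (.or A B)))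
  | .imp A B => .and (.imp (S.tr A) (S.tr B)) (.atom (S.angle (.imp A B)))
  | .box A   => .and (.box (S.tr A)) (.atom (S.angle (.box A)))
  | .dia A   => .and (.dia (S.tr A)) (.atom (S.angle (.dia A)))

/-- Action of the standard substitution on atoms: an angled atom `⟨φ⟩` is sent
to `φ`; plain atoms are fixed. -/
noncomputable def Angling.stdAtom (S : Angling α) (a : α) : Fml α :=
  haveI := Classical.propDecidable (∃ φ : Fml α, S.angle φ = a)
  if h : ∃ φ : Fml α, S.angle φ = a then h.choose else .atom a

/-- The standard substitution `s`: replaces each angled atom `⟨φ⟩` by `φ`,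
fixes the plain atoms, and commutes with all connectives. -/
noncomputable def Angling.std (S : Angling α) : Fml α → Fml α :=
  Fml.subst S.stdAtom

/-- The Visser–Harrop property of a calculus. -/
def VisserHarrop (R : RuleSet α) : Prop :=
  ∀ (Γ : Multiset (Fml α)), (∀ A ∈ Γ, Harrop A) →
  ∀ (AB : List (Fml α × Fml α)) (C D : Fml α),
    Derives R (Γ + imps AB) (some (.or C D)) →
    Derives R (Γ + imps AB) (some C) ∨
    Derives R (Γ + imps AB) (some D) ∨
    ∃ p ∈ AB, Derives R (Γ + imps AB) (some p.1)

/-- The disjunction property of a calculus. -/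
def DisjProp (R : RuleSet α) : Prop :=
  ∀ C D : Fml α, Derives R 0 (some (.or C D)) →
    Derives R 0 (some C) ∨ Derives R 0 (some D)

/-- The formula interpretation `I(Γ ⇒ Δ) = ⋀Γ → ⋁Δ` belongs to `L` (stated for
every enumeration of the antecedent multiset as a list). -/
def interpIn (L : Set (Fml α)) (s : Seq α) : Prop :=
  ∀ l : List (Fml α), (↑l : Multiset (Fml α)) = s.1 → Fml.imp (conj l) (odisj s.2) ∈ L

/- Named modal axioms (with `p := atom 0`, `q := atom 1`). -/
def axTa : Fml ℕ := .imp (.box (.atom 0)) (.atom 0)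
def axTb : Fml ℕ := .imp (.atom 0) (.dia (.atom 0))
def axBa : Fml ℕ := .imp (.dia (.box (.atom 0))) (.atom 0)
def axBb : Fml ℕ := .imp (.atom 0) (.box (.dia (.atom 0)))
def ax4a : Fml ℕ := .imp (.box (.atom 0)) (.box (.box (.atom 0)))
def ax4b : Fml ℕ := .imp (.dia (.dia (.atom 0))) (.dia (.atom 0))
def ax5a : Fml ℕ := .imp (.dia (.box (.atom 0))) (.box (.atom 0))
def ax5b : Fml ℕ := .imp (.dia (.atom 0)) (.box (.dia (.atom 0)))
def axDiaBot : Fml ℕ := .imp (.dia .bot) .bot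
def axDiaOr : Fml ℕ :=
  .imp (.dia (.or (.atom 0) (.atom 1))) (.or (.dia (.atom 0)) (.dia (.atom 1)))
def axBoxImp : Fml ℕ :=
  .imp (.imp (.dia (.atom 0)) (.box (.atom 1))) (.box (.imp (.atom 0) (.atom 1)))

/-- The axioms of `X ⊆ {T, B, 4, 5}` in both their `a`- and `b`-versions. -/
def XAxioms (tT tB t4 t5 : Bool) : Set (Fml ℕ) :=
  (if tT then ({axTa, axTb} : Set (Fml ℕ)) else ∅) ∪
  (if tB then ({axBa, axBb} : Set (Fml ℕ)) else ∅) ∪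
  (if t4 then ({ax4a, ax4b} : Set (Fml ℕ)) else ∅) ∪
  (if t5 then ({ax5a, ax5b} : Set (Fml ℕ)) else ∅)

/-- The additional axioms of `IK` over `CK`. -/
def IKExtra : Set (Fml ℕ) := {axDiaBot, axDiaOr, axBoxImp}

/-- The right rule with premises `{Γ, φ̄_i ⇒ ψ̄_i}_{i∈I}` and conclusion
`Γ, θ̄ ⇒ η̄`, closed under all substitutions of formulas for atoms and
multisets for the context `Γ`. -/
def rightRuleInst (prems : List (List (Fml α) × Option (Fml α)))
    (θ : List (Fml α)) (η : Option (Fml α)) : RuleSet α := fun ps c =>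
  ∃ (σ : α → Fml α) (Γ : Multiset (Fml α)),
    ps = prems.map (fun pr =>
        ((Γ + ↑(pr.1.map (Fml.subst σ)) : Multiset (Fml α)), pr.2.map (Fml.subst σ))) ∧
    c = ((Γ + ↑(θ.map (Fml.subst σ)) : Multiset (Fml α)), η.map (Fml.subst σ))

/-- The left rule with premises `{Γ, φ̄_i ⇒ ψ̄_i}_{i∈I} ∪ {Γ, θ̄_j ⇒ Δ}_{j∈J}`
and conclusion `Γ, η̄ ⇒ Δ`, closed under all substitutions of formulas for
atoms and multisets for `Γ` and `Δ`. -/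
def leftRuleInst (prems : List (List (Fml α) × Option (Fml α)))
    (lefts : List (List (Fml α))) (η : List (Fml α)) : RuleSet α := fun ps c =>
  ∃ (σ : α → Fml α) (Γ : Multiset (Fml α)) (Δ : Option (Fml α)),
    ps = prems.map (fun pr =>
          ((Γ + ↑(pr.1.map (Fml.subst σ)) : Multiset (Fml α)), pr.2.map (Fml.subst σ)))
        ++ lefts.map (fun θj => ((Γ + ↑(θj.map (Fml.subst σ)) : Multiset (Fml α)), Δ)) ∧
    c = ((Γ + ↑(η.map (Fml.subst σ)) : Multiset (Fml α)), Δ)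

/-- The formula `Ax_R` of a right rule. -/
def AxRight (prems : List (List (Fml α) × Option (Fml α)))
    (θ : List (Fml α)) (η : Option (Fml α)) : Fml α :=
  .imp (.and (conj (prems.map fun pr => .imp (conj pr.1) (odisj pr.2))) (conj θ)) (odisj η)

/-- The formula `Ax_R` of a left rule. -/
def AxLeft (prems : List (List (Fml α) × Option (Fml α)))
    (lefts : List (List (Fml α))) (η : List (Fml α)) : Fml α :=
  .imp (.and (conj (prems.map fun pr => .imp (conj pr.1) (odisj pr.2))) (conj η))
    (disj (lefts.map conj))

/-- The forgetful translation `f_i`: fixes atoms, `⊤`, `⊥`, commutes with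
`∧`, `∨`, `→`, `□`, and sends every `◇A` to `⊥`. -/
def fi : Fml α → Fml α
  | .atom a  => .atom a
  | .top     => .top
  | .bot     => .bot
  | .and A B => .and (fi A) (fi B)
  | .or A B  => .or (fi A) (fi B)
  | .imp A B => .imp (fi A) (fi B)
  | .box A   => .box (fi A)
  | .dia _   => .bot

/-- The forgetful translation `f_r`: fixes atoms, `⊤`, `⊥`, commutes with
`∧`, `∨`, `→`, `□`, and sends `◇A` to `f_r A`. -/
def fr : Fml α → Fml α
  | .atom a  => .atom a
  | .top     => .top
  | .bot     => .bot
  | .and A B => .and (fr A) (fr B)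
  | .or A B  => .or (fr A) (fr B)
  | .imp A B => .imp (fr A) (fr B)
  | .box A   => .box (fr A)
  | .dia A   => fr A


/-!
Every modal Horn formula `A` unfolds into implicational Horn clauses `⋀Q → r`: follow the
`□`s and the implications `⋀ᵢ ◇^{nᵢ} pᵢ → B` of `A` down to an atom or `⊥`, collecting the
`pᵢ` in `Q`. In `𝒦ᵣ` the modalities are transparent, and the derivable instances of `□B → B`
and `B → ◇B` let `G` derive every such clause from `A`. In `𝒦ᵢ` a boxed formula, and an
implication with a `◇` in its premise, is true outright, so these branches are dropped and the
remaining clauses are derivable in `CK` alone. Either way, a valuation satisfying the clauses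
of `Σ` satisfies `Σ` in the frame; if it also falsifies every `q_j`, soundness of `G` for the
frame, applied to the given derivation, makes some `p_i` true.
-/

section Derivations

variable {Ax : Fml α → Prop}

theorem Derives.of_LJRule {ps : List (Seq α)} {c : Seq α} (h : LJRule ps c)
    (hp : ∀ p ∈ ps, Derives (CKSys Ax) p.1 p.2) : Derives (CKSys Ax) c.1 c.2 :=
  Derives.step (Or.inl h) hp

theorem Derives.of_mem {Γ : Multiset (Fml α)} {A : Fml α} (h : A ∈ Γ) :
    Derives (CKSys Ax) Γ (some A) := by
  obtain ⟨Γ', rfl⟩ := Multiset.exists_cons_of_mem h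
  exact .of_LJRule (c := (_, _)) (.id Γ' A) (by simp)

theorem Derives.botL (Γ : Multiset (Fml α)) (Δ : Option (Fml α)) :
    Derives (CKSys Ax) (.bot ::ₘ Γ) Δ :=
  .of_LJRule (c := (_, _)) (.botL Γ Δ) (by simp)

theorem Derives.weaken {Γ Γ' : Multiset (Fml α)} {Δ : Option (Fml α)}
    (h : Derives (CKSys Ax) Γ Δ) (hle : Γ ≤ Γ') : Derives (CKSys Ax) Γ' Δ := by
  obtain ⟨t, rfl⟩ := Multiset.le_iff_exists_add.1 hle
  induction t using Multiset.induction_on with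
  | empty => simpa using h
  | cons A t ih =>
    rw [Multiset.add_cons]
    exact .of_LJRule (c := (_, _)) (.wL A _ Δ) (by simpa using ih (by simp))

theorem Derives.cut {Γ : Multiset (Fml α)} {Δ : Option (Fml α)} {A : Fml α}
    (h₁ : Derives (CKSys Ax) Γ (some A)) (h₂ : Derives (CKSys Ax) (A ::ₘ Γ) Δ) :
    Derives (CKSys Ax) Γ Δ :=
  .of_LJRule (c := (_, _)) (.cut A Γ Δ) (by simp [h₁, h₂])

theorem Derives.andR {Γ : Multiset (Fml α)} {A B : Fml α}
    (h₁ : Derives (CKSys Ax) Γ (some A)) (h₂ : Derives (CKSys Ax) Γ (some B)) :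
    Derives (CKSys Ax) Γ (some (.and A B)) :=
  .of_LJRule (c := (_, _)) (.andR A B Γ) (by simp [h₁, h₂])

theorem Derives.impR {Γ : Multiset (Fml α)} {A B : Fml α}
    (h : Derives (CKSys Ax) (A ::ₘ Γ) (some B)) : Derives (CKSys Ax) Γ (some (.imp A B)) :=
  .of_LJRule (c := (_, _)) (.impR A B Γ) (by simpa using h)

theorem Derives.impL {Γ : Multiset (Fml α)} {Δ : Option (Fml α)} {A B : Fml α}
    (h₁ : Derives (CKSys Ax) Γ (some A)) (h₂ : Derives (CKSys Ax) (B ::ₘ Γ) Δ) :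
    Derives (CKSys Ax) (.imp A B ::ₘ Γ) Δ :=
  .of_LJRule (c := (_, _)) (.impL A B Γ Δ) (by simp [h₁, h₂])

theorem Derives.mp {Γ : Multiset (Fml α)} {A B : Fml α}
    (hAB : Derives (CKSys Ax) 0 (some (.imp A B))) (hA : Derives (CKSys Ax) Γ (some A)) :
    Derives (CKSys Ax) Γ (some B) :=
  .cut (hAB.weaken (Multiset.zero_le Γ)) (.impL hA (.of_mem (Multiset.mem_cons_self B Γ)))

theorem Derives.conj_right {Γ : Multiset (Fml α)} :
    ∀ {L : List (Fml α)}, (∀ A ∈ L, Derives (CKSys Ax) Γ (some A)) →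
      Derives (CKSys Ax) Γ (some (conj L))
  | [], _ => .of_LJRule (c := (_, _)) (.topR Γ) (by simp)
  | [A], h => h A (by simp)
  | A :: B :: L, h =>
    .andR (h A (by simp)) (conj_right fun C hC => h C (List.mem_cons_of_mem A hC))

theorem Derives.conj_left {Δ : Option (Fml α)} :
    ∀ {L : List (Fml α)} {Γ : Multiset (Fml α)}, Derives (CKSys Ax) (↑L + Γ) Δ →
      Derives (CKSys Ax) (conj L ::ₘ Γ) Δ
  | [], Γ, h => h.weaken (by simp [Multiset.le_cons_self])
  | [A], _, h => by simpa [conj] using h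
  | A :: B :: L, Γ, h => by
    set C := conj (B :: L)
    show Derives (CKSys Ax) (.and A C ::ₘ Γ) Δ
    have hC : Derives (CKSys Ax) (C ::ₘ A ::ₘ Γ) Δ :=
      conj_left (by rwa [Multiset.add_cons, ← Multiset.cons_add, Multiset.cons_coe])
    have hAC : Derives (CKSys Ax) (A ::ₘ .and A C ::ₘ Γ) Δ := by
      rw [Multiset.cons_swap]
      exact .of_LJRule (c := (_, _)) (.andL₂ A C _ Δ) (by simpa using hC)
    have hACAC : Derives (CKSys Ax) (.and A C ::ₘ .and A C ::ₘ Γ) Δ :=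
      .of_LJRule (c := (_, _)) (.andL₁ A C _ Δ) (by simpa using hAC)
    exact .of_LJRule (c := (_, _)) (.cL _ Γ Δ) (by simpa using hACAC)

end Derivations

section Substitution

variable {Ax : Fml α → Prop}

theorem Fml.subst_subst (σ τ : α → Fml α) (A : Fml α) :
    (A.subst σ).subst τ = A.subst fun a => (σ a).subst τ := by
  induction A <;> simp [Fml.subst, *]

def Seq.subst (τ : α → Fml α) (s : Seq α) : Seq α :=
  (s.1.map (Fml.subst τ), s.2.map (Fml.subst τ))

theorem LJRule.subst (τ : α → Fml α) {ps : List (Seq α)} {c : Seq α} (h : LJRule ps c) :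
    LJRule (ps.map (Seq.subst τ)) (c.subst τ) := by
  cases h <;>
    simp only [Seq.subst, List.map, Multiset.map_cons, Option.map_some, Option.map_none,
      Fml.subst] <;>
    constructor

theorem CKSys.subst (τ : α → Fml α) {ps : List (Seq α)} {c : Seq α} (h : CKSys Ax ps c) :
    CKSys Ax (ps.map (Seq.subst τ)) (c.subst τ) := by
  rcases h with h | ⟨Γ, A⟩ | ⟨Γ, A, B⟩ | ⟨rfl, A, σ, hA, rfl⟩
  · exact Or.inl (h.subst τ)
  · refine Or.inr (Or.inl ?_)
    simpa [Seq.subst, Multiset.map_map, Function.comp_def, Fml.subst] using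
      KBoxRule.mk (Γ.map (Fml.subst τ)) (A.subst τ)
  · refine Or.inr (Or.inr (Or.inl ?_))
    simpa [Seq.subst, Multiset.map_map, Function.comp_def, Fml.subst] using
      KDiaRule.mk (Γ.map (Fml.subst τ)) (A.subst τ) (B.subst τ)
  · exact Or.inr (Or.inr (Or.inr ⟨rfl, A, fun a => (σ a).subst τ, hA, by
      simp [Seq.subst, Fml.subst_subst]⟩))

theorem Derives.subst (τ : α → Fml α) {Γ : Multiset (Fml α)} {Δ : Option (Fml α)}
    (h : Derives (CKSys Ax) Γ Δ) :
    Derives (CKSys Ax) (Γ.map (Fml.subst τ)) (Δ.map (Fml.subst τ)) := by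
  induction h with
  | step hr _ ih =>
    exact Derives.step (c := Seq.subst τ (_, _)) (hr.subst τ) (by
      simp only [List.mem_map]
      rintro _ ⟨p, hp, rfl⟩
      exact ih p hp)

def DerivesTInstances (Ax : Fml α → Prop) : Prop :=
  ∀ B : Fml α, Derives (CKSys Ax) 0 (some (.imp (.box B) B)) ∧
    Derives (CKSys Ax) 0 (some (.imp B (.dia B)))

theorem TFull.derivesTInstances [Inhabited α] (h : TFull Ax) : DerivesTInstances Ax :=
  fun B => ⟨by simpa [Fml.subst] using (h.2.1 default).subst fun _ => B,
    by simpa [Fml.subst] using (h.2.2 default).subst fun _ => B⟩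

end Substitution

section HornClauses

structure IsPropEval (ev : (α → Bool) → Fml α → Bool) : Prop where
  atom : ∀ v a, ev v (.atom a) = v a
  top : ∀ v, ev v .top = true
  bot : ∀ v, ev v .bot = false
  and : ∀ v A B, ev v (.and A B) = (ev v A && ev v B)
  or : ∀ v A B, ev v (.or A B) = (ev v A || ev v B)
  imp : ∀ v A B, ev v (.imp A B) = (!ev v A || ev v B)

theorem isPropEval_evalI : IsPropEval (evalI (α := α)) :=
  ⟨fun _ _ => rfl, fun _ => rfl, fun _ => rfl, fun _ _ _ => rfl, fun _ _ _ => rfl,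
    fun _ _ _ => rfl⟩

theorem isPropEval_evalR : IsPropEval (evalR (α := α)) :=
  ⟨fun _ _ => rfl, fun _ => rfl, fun _ => rfl, fun _ _ _ => rfl, fun _ _ _ => rfl,
    fun _ _ _ => rfl⟩

variable {ev : (α → Bool) → Fml α → Bool}

theorem IsPropEval.conj_atoms_eq_true (hev : IsPropEval ev) (v : α → Bool) :
    ∀ Q : List α, ev v (conj (Q.map .atom)) = true ↔ ∀ a ∈ Q, v a = true
  | [] => by simp [conj, hev.top]
  | [a] => by simp [conj, hev.atom]
  | a :: b :: Q => by
    show ev v (.and (.atom a) (conj ((b :: Q).map .atom))) = true ↔ _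
    rw [hev.and, Bool.and_eq_true, hev.atom, hev.conj_atoms_eq_true v (b :: Q)]
    simp

theorem IsPropEval.disj_atoms_eq_true (hev : IsPropEval ev) (v : α → Bool) :
    ∀ P : List α, ev v (disj (P.map .atom)) = true ↔ ∃ a ∈ P, v a = true
  | [] => by simp [disj, hev.bot]
  | [a] => by simp [disj, hev.atom]
  | a :: b :: P => by
    show ev v (.or (.atom a) (disj ((b :: P).map .atom))) = true ↔ _
    rw [hev.or, Bool.or_eq_true, hev.atom, hev.disj_atoms_eq_true v (b :: P)]
    simp

theorem atomConj_conj_atoms : ∀ Q : List α, Q ≠ [] → AtomConj (conj (Q.map .atom))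
  | [a], _ => .single a
  | a :: b :: Q, _ => .and (.single a) (atomConj_conj_atoms (b :: Q) (List.cons_ne_nil b Q))

/-- `head = none` stands for `⊥`. -/
structure HornClause (α : Type) where
  body : List α
  head : Option α

def HornClause.headFml (c : HornClause α) : Fml α := odisj (c.head.map .atom)

/-- An empty body gives the bare head, as `⊤ → r` is not implicational Horn. -/
def HornClause.toFml (c : HornClause α) : Fml α :=
  match c.body with
  | [] => c.headFml
  | _ :: _ => .imp (conj (c.body.map .atom)) c.headFml

def HornClause.Holds (v : α → Bool) (c : HornClause α) : Prop :=
  (∀ a ∈ c.body, v a = true) → ∃ b ∈ c.head, v b = true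

theorem HornClause.impHorn_toFml (c : HornClause α) : ImpHorn c.toFml := by
  rcases c with ⟨_ | ⟨a, Q⟩, _ | r⟩
  · exact .bot
  · exact .atom r
  · exact .impBot (atomConj_conj_atoms _ (List.cons_ne_nil a Q))
  · exact .impAtom (atomConj_conj_atoms _ (List.cons_ne_nil a Q)) r

theorem IsPropEval.headFml_eq_true (hev : IsPropEval ev) (v : α → Bool) (c : HornClause α) :
    ev v c.headFml = true ↔ ∃ b ∈ c.head, v b = true := by
  rcases c with ⟨_, _ | r⟩ <;> simp [HornClause.headFml, odisj, hev.bot, hev.atom]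

theorem IsPropEval.toFml_eq_true (hev : IsPropEval ev) (v : α → Bool) (c : HornClause α) :
    ev v c.toFml = true ↔ c.Holds v := by
  rcases c with ⟨_ | ⟨a, Q⟩, r⟩
  · simp [HornClause.toFml, HornClause.Holds, hev.headFml_eq_true]
  · rw [HornClause.Holds, ← hev.conj_atoms_eq_true, ← hev.headFml_eq_true]
    simp only [HornClause.toFml, hev.imp]
    cases ev v (conj ((a :: Q).map .atom)) <;> simp

end HornClauses

section ModalHornClauses

def Fml.hasDia : Fml α → Bool
  | .and A B | .or A B | .imp A B => A.hasDia || B.hasDia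
  | .box A => A.hasDia
  | .dia _ => true
  | _ => false

def Fml.diaConjAtoms : Fml α → List α
  | .atom a => [a]
  | .dia A => A.diaConjAtoms
  | .and A B => A.diaConjAtoms ++ B.diaConjAtoms
  | _ => []

/-- For `full = false` the branches that are true in `𝒦ᵢ` anyway (under a `□`, or behind a
premise containing a `◇`) contribute no clauses. -/
def hornClauses (full : Bool) : Fml α → List (HornClause α)
  | .bot => [⟨[], none⟩]
  | .atom a => [⟨[], some a⟩]
  | .box B => if full then hornClauses full B else []
  | .imp D B =>
    if full || !D.hasDia then
      (hornClauses full B).map fun c => ⟨D.diaConjAtoms ++ c.body, c.head⟩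
    else []
  | _ => []

theorem HornClause.Holds.of_append_body {v : α → Bool} {Q : List α} {c : HornClause α}
    (h : HornClause.Holds v ⟨Q ++ c.body, c.head⟩) (hQ : ∀ a ∈ Q, v a = true) : c.Holds v :=
  fun hbody => h fun a ha => (List.mem_append.1 ha).elim (hQ a) (hbody a)

variable {v : α → Bool} {D A : Fml α}

theorem DiaConj.evalI_eq_true (hD : DiaConj D) (h : evalI v D = true) :
    D.hasDia = false ∧ ∀ a ∈ D.diaConjAtoms, v a = true := by
  induction hD with
  | single hP =>
    cases hP with
    | atom b => simpa [Fml.hasDia, Fml.diaConjAtoms, evalI] using h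
    | dia => simp [evalI] at h
  | and _ _ ih₁ ih₂ =>
    simp only [evalI, Bool.and_eq_true] at h
    obtain ⟨hd₁, ha₁⟩ := ih₁ h.1
    obtain ⟨hd₂, ha₂⟩ := ih₂ h.2
    refine ⟨by simp [Fml.hasDia, hd₁, hd₂], fun a ha => ?_⟩
    exact (List.mem_append.1 ha).elim (ha₁ a) (ha₂ a)

theorem DiaConj.evalR_eq_true (hD : DiaConj D) (h : evalR v D = true) :
    ∀ a ∈ D.diaConjAtoms, v a = true := by
  induction hD with
  | single hP =>
    induction hP with
    | atom b => simpa [Fml.diaConjAtoms, evalR] using h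
    | dia _ ih => exact ih h
  | and _ _ ih₁ ih₂ =>
    simp only [evalR, Bool.and_eq_true] at h
    exact fun a ha => (List.mem_append.1 ha).elim (ih₁ h.1 a) (ih₂ h.2 a)

theorem ModalHorn.evalI_eq_true (hA : ModalHorn A)
    (h : ∀ c ∈ hornClauses false A, c.Holds v) : evalI v A = true := by
  induction hA with
  | bot => simp [hornClauses, HornClause.Holds] at h
  | atom a => simpa [hornClauses, HornClause.Holds, evalI] using h
  | box => rfl
  | @imp D B hD _ ih =>
    by_cases hDv : evalI v D = true
    · obtain ⟨hnd, hatoms⟩ := hD.evalI_eq_true hDv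
      have hB : evalI v B = true := ih fun c hc =>
        (h _ (by rw [hornClauses, if_pos (by simp [hnd])]; exact List.mem_map_of_mem hc)).of_append_body hatoms
      simp [evalI, hB]
    · simp [evalI, hDv]

theorem ModalHorn.evalR_eq_true (hA : ModalHorn A)
    (h : ∀ c ∈ hornClauses true A, c.Holds v) : evalR v A = true := by
  induction hA with
  | bot => simp [hornClauses, HornClause.Holds] at h
  | atom a => simpa [hornClauses, HornClause.Holds, evalR] using h
  | box _ ih => exact ih (by simpa [hornClauses] using h)
  | @imp D B hD _ ih =>
    by_cases hDv : evalR v D = true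
    · have hB : evalR v B = true := ih fun c hc =>
        (h _ (by rw [hornClauses, if_pos (Bool.true_or _)]; exact List.mem_map_of_mem hc)).of_append_body (hD.evalR_eq_true hDv)
      simp [evalR, hB]
    · simp [evalR, hDv]

variable {Ax : Fml α → Prop}

theorem DiaConj.derives_of_atoms_mem (hD : DiaConj D)
    (hT : D.hasDia = true → DerivesTInstances Ax) {Γ : Multiset (Fml α)}
    (hΓ : ∀ a ∈ D.diaConjAtoms, .atom a ∈ Γ) : Derives (CKSys Ax) Γ (some D) := by
  induction hD with
  | single hP =>
    induction hP with
    | atom b => exact .of_mem (hΓ b (by simp [Fml.diaConjAtoms]))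
    | @dia B _ ih => exact ((hT rfl) B).2.mp (ih (fun _ => hT rfl) hΓ)
  | and _ _ ih₁ ih₂ =>
    exact .andR (ih₁ (fun h => hT (by simp [Fml.hasDia, h]))
        fun a ha => hΓ a (List.mem_append_left _ ha))
      (ih₂ (fun h => hT (by simp [Fml.hasDia, h])) fun a ha => hΓ a (List.mem_append_right _ ha))

theorem ModalHorn.derives_headFml {full : Bool} (hA : ModalHorn A)
    (hT : full = true → DerivesTInstances Ax) :
    ∀ c ∈ hornClauses full A,
      Derives (CKSys Ax) (A ::ₘ ↑(c.body.map Fml.atom)) (some c.headFml) := by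
  induction hA with
  | bot =>
    intro c hc
    obtain rfl : c = ⟨[], none⟩ := by simpa [hornClauses] using hc
    exact .botL _ _
  | atom a =>
    intro c hc
    obtain rfl : c = ⟨[], some a⟩ := by simpa [hornClauses] using hc
    exact .of_mem (by simp [HornClause.headFml, odisj])
  | @box B _ ih =>
    intro c hc
    cases full
    · simp [hornClauses] at hc
    · have hB : Derives (CKSys Ax) (.box B ::ₘ ↑(c.body.map Fml.atom)) (some B) :=
        ((hT rfl) B).1.mp (.of_mem (Multiset.mem_cons_self _ _))
      refine hB.cut ((ih c (by simpa [hornClauses] using hc)).weaken ?_)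
      exact Multiset.cons_le_cons B (Multiset.le_cons_self _ _)
  | @imp D B hD _ ih =>
    intro c hc
    rw [hornClauses] at hc
    split_ifs at hc with hfull
    · obtain ⟨c, hcB, rfl⟩ := List.mem_map.1 hc
      refine .impL (hD.derives_of_atoms_mem (fun h => hT (by simpa [h] using hfull)) ?_)
        ((ih c hcB).weaken ?_)
      · intro a ha
        simp [ha]
      · simp only [List.map_append, ← Multiset.coe_add]
        exact Multiset.cons_le_cons B (Multiset.le_add_left _ _)
    · simp at hc

theorem ModalHorn.derives_toFml {full : Bool} (hA : ModalHorn A)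
    (hT : full = true → DerivesTInstances Ax) :
    ∀ c ∈ hornClauses full A, Derives (CKSys Ax) {A} (some c.toFml) := by
  intro c hc
  have h := hA.derives_headFml hT c hc
  rcases c with ⟨_ | ⟨a, Q⟩, r⟩
  · simpa [HornClause.toFml] using h
  · exact .impR (.conj_left (by simpa [add_comm] using h))

end ModalHornClauses

section Reduction

variable {Ax : Fml α → Prop} {ev : (α → Bool) → Fml α → Bool}

theorem exists_impHorn_of_hornClauses (hev : IsPropEval ev)
    (hsound : ∀ Γ Δ, Derives (CKSys Ax) Γ Δ → SeqValid ev Γ Δ)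
    {Sig : Multiset (Fml α)} (cl : Fml α → List (HornClause α))
    (hder : ∀ A ∈ Sig, ∀ c ∈ cl A, Derives (CKSys Ax) {A} (some c.toFml))
    (hsem : ∀ A ∈ Sig, ∀ v, (∀ c ∈ cl A, c.Holds v) → ev v A = true)
    {ps qs : List α}
    (h : Derives (CKSys Ax) (Sig + ↑(qs.map fun q => Fml.imp (.atom q) .bot))
      (some (disj (ps.map Fml.atom)))) :
    ∃ Sig' : List (Fml α), (∀ A ∈ Sig', ImpHorn A) ∧
      ClValid (↑Sig' : Multiset (Fml α))
        (some (.or (disj (ps.map Fml.atom)) (disj (qs.map Fml.atom)))) ∧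
      Derives (CKSys Ax) Sig (some (conj Sig')) := by
  set cs := Sig.toList.flatMap cl
  have mem_cs {c : HornClause α} : c ∈ cs ↔ ∃ A ∈ Sig, c ∈ cl A := by simp [cs]
  refine ⟨cs.map HornClause.toFml, by simp [HornClause.impHorn_toFml], fun v hv => ⟨_, rfl, ?_⟩,
    .conj_right fun H hH => ?_⟩
  · have hcs : ∀ c ∈ cs, c.Holds v := fun c hc =>
      (isPropEval_evalI.toFml_eq_true v c).1 (hv _ (by simpa using List.mem_map_of_mem hc))
    simp only [evalI, Bool.or_eq_true, isPropEval_evalI.disj_atoms_eq_true]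
    by_contra! hfalse
    obtain ⟨_, hB, hps⟩ := hsound _ _ h v fun A hA => by
      rcases Multiset.mem_add.1 hA with hA | hA
      · exact hsem A hA v fun c hc => hcs c (mem_cs.2 ⟨A, hA, hc⟩)
      · obtain ⟨q, hq, rfl⟩ := List.mem_map.1 hA
        simp [hev.imp, hev.atom, hev.bot, hfalse.2 q hq]
    obtain rfl := Option.mem_some_iff.1 hB
    obtain ⟨p, hp, hvp⟩ := (hev.disj_atoms_eq_true v ps).1 hps
    simp [hfalse.1 p hp] at hvp
  · obtain ⟨c, hc, rfl⟩ := List.mem_map.1 hH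
    obtain ⟨A, hA, hcA⟩ := mem_cs.1 hc
    exact (hder A hA c hcA).weaken (Multiset.singleton_le.2 hA)

end Reduction

theorem statement_10_general (CS : Finset (Fml ℕ))
    (hTF : TFree (· ∈ CS) ∨ TFull (· ∈ CS))
    (Sig : Multiset (Fml ℕ)) (hSig : ∀ A ∈ Sig, ModalHorn A)
    (ps qs : List ℕ)
    (h : Derives (CKSys (· ∈ CS))
          (Sig + ↑(qs.map fun q => Fml.imp (.atom q) .bot))
          (some (disj (ps.map Fml.atom)))) :
    ∃ Sig' : List (Fml ℕ),
      (∀ A ∈ Sig', ImpHorn A) ∧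
      ClValid (↑Sig' : Multiset (Fml ℕ))
        (some (.or (disj (ps.map Fml.atom)) (disj (qs.map Fml.atom)))) ∧
      Derives (CKSys (· ∈ CS)) Sig (some (conj Sig')) := by
  rcases hTF with hfree | hfull
  · exact exists_impHorn_of_hornClauses isPropEval_evalI hfree (hornClauses false)
      (fun A hA => (hSig A hA).derives_toFml (by simp))
      (fun A hA _ => (hSig A hA).evalI_eq_true) h
  · exact exists_impHorn_of_hornClauses isPropEval_evalR hfull.1 (hornClauses true)
      (fun A hA => (hSig A hA).derives_toFml fun _ => hfull.derivesTInstances)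
      (fun A hA _ => (hSig A hA).evalR_eq_true) h

/-- reduction: if the T-free or T-full calculus `G = CK+𝒞`
proves `Σ, {¬q_j}_j ⇒ ⋁_i p_i` with `Σ` modal Horn, then there is a multiset
`Σ'` of implicational Horn formulas such that `Σ' ⇒ ⋁_i p_i ∨ ⋁_j q_j` is
classically valid and `G ⊢ Σ ⇒ ⋀Σ'`. -/
theorem statement_10 (CS : Finset (Fml ℕ)) (hCS : ∀ A ∈ CS, Constructive A)
    (hTF : TFree (· ∈ CS) ∨ TFull (· ∈ CS))
    (Sig : Multiset (Fml ℕ)) (hSig : ∀ A ∈ Sig, ModalHorn A)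
    (ps qs : List ℕ)
    (h : Derives (CKSys (· ∈ CS))
          (Sig + ↑(qs.map fun q => Fml.imp (.atom q) .bot))
          (some (disj (ps.map Fml.atom)))) :
    ∃ Sig' : List (Fml ℕ),
      (∀ A ∈ Sig', ImpHorn A) ∧
      ClValid (↑Sig' : Multiset (Fml ℕ))
        (some (.or (disj (ps.map Fml.atom)) (disj (qs.map Fml.atom)))) ∧
      Derives (CKSys (· ∈ CS)) Sig (some (conj Sig')) :=
  statement_10_general CS hTF Sig hSig ps qs h

end UPT
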